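/- For c ∈ (0,1], the function f(F) = 1/√(c(2F − 2 + c)) on ((2−c)/2, 1] is a probability density (it integrates to 1), its mean equals 1 − c/3, and its variance equals c²/45. -/

import Mathlib

/-! The substitution `u = √(c (2F − 2 + c))`, i.e. `F = 1 − c/2 + u²/(2c)`, has
`du = c f(F) dF` and maps `((2 − c)/2, 1]` onto `(0, c]`. So `f` is the law of
`1 − c/2 + U²/(2c)` with `U` uniform on `[0, c]`, and its moments are integrals of polynomials
in `u` over `[0, c]`. -/

open MeasureTheory Set

/-- Phase-flip fidelity density f(F) = 1/√(c(2F − 2 + c)). -/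
noncomputable def fPf (c F : ℝ) : ℝ := 1 / Real.sqrt (c * (2 * F - 2 + c))

section

variable {c : ℝ}

theorem hasDerivAt_sqrt_mul_fPf (hc : 0 < c) {F : ℝ} (hF : (2 - c) / 2 < F) :
    HasDerivAt (fun F => √(c * (2 * F - 2 + c))) (c * fPf c F) F := by
  have hpos : 0 < c * (2 * F - 2 + c) := mul_pos hc (by linarith)
  have hlin : HasDerivAt (fun F => c * (2 * F - 2 + c)) (c * 2) F :=
    ((((hasDerivAt_id F).const_mul 2).sub_const 2).add_const c).const_mul c |>.congr_deriv
      (by simp)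
  convert hlin.sqrt hpos.ne' using 1
  rw [fPf]
  field_simp

theorem integral_mul_fPf_eq (hc : 0 < c) {b : ℝ} (hb : (2 - c) / 2 ≤ b) {h : ℝ → ℝ}
    (hh : Continuous h) :
    ∫ F in (2 - c) / 2..b, h F * fPf c F =
      c⁻¹ * ∫ u in 0..√(c * (2 * b - 2 + c)), h (1 - c / 2 + u ^ 2 / (2 * c)) := by
  set ψ : ℝ → ℝ := fun F => √(c * (2 * F - 2 + c))
  set g : ℝ → ℝ := fun u => h (1 - c / 2 + u ^ 2 / (2 * c))
  have hψ : Continuous ψ := by fun_prop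
  have hg : Continuous g := by fun_prop
  have hderiv : ∀ x ∈ Ioo (min ((2 - c) / 2) b) (max ((2 - c) / 2) b),
      HasDerivAt ψ (c * fPf c x) x := by
    intro x hx
    rw [min_eq_left hb] at hx
    exact hasDerivAt_sqrt_mul_fPf hc hx.1
  have hdensity : IntervalIntegrable (fun x => c * fPf c x) volume ((2 - c) / 2) b :=
    intervalIntegral.intervalIntegrable_deriv_of_nonneg hψ.continuousOn hderiv fun x _ =>
      mul_nonneg hc.le (one_div_nonneg.2 (Real.sqrt_nonneg _))
  have hinv : ∀ x ∈ uIcc ((2 - c) / 2) b,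
      (g ∘ ψ) x * (c * fPf c x) = c * (h x * fPf c x) := by
    intro x hx
    rw [uIcc_of_le hb] at hx
    have hsq : 0 ≤ c * (2 * x - 2 + c) := mul_nonneg hc.le (by linarith [hx.1])
    have hψ_inv : 1 - c / 2 + c * (2 * x - 2 + c) / (2 * c) = x := by field_simp; ring
    simp only [Function.comp_apply, g, ψ, Real.sq_sqrt hsq, hψ_inv]
    ring
  have hψ_left : ψ ((2 - c) / 2) = 0 := by
    show √_ = 0
    rw [show c * (2 * ((2 - c) / 2) - 2 + c) = 0 by ring, Real.sqrt_zero]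
  have hcov := intervalIntegral.integral_comp_mul_deriv''' hψ.continuousOn
    (fun x hx => (hderiv x hx).hasDerivWithinAt) hg.continuousOn
    (hg.continuousOn.integrableOn_compact (isCompact_uIcc.image hψ))
    (by rw [← intervalIntegrable_iff']; exact hdensity.continuousOn_mul (hg.comp hψ).continuousOn)
  rw [hψ_left, intervalIntegral.integral_congr hinv, intervalIntegral.integral_const_mul] at hcov
  rw [← hcov, inv_mul_cancel_left₀ hc.ne']

end

/-- For c ∈ (0,1], f integrates to 1 on ((2−c)/2, 1], has mean 1 − c/3 and
variance c²/45. -/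
theorem phase_flip_density_moments (c : ℝ) (hc : c ∈ Ioc (0 : ℝ) 1) :
    (∫ F in ((2 - c) / 2)..1, fPf c F) = 1 ∧
    (∫ F in ((2 - c) / 2)..1, F * fPf c F) = 1 - c / 3 ∧
    (∫ F in ((2 - c) / 2)..1, F ^ 2 * fPf c F) - (1 - c / 3) ^ 2 = c ^ 2 / 45 := by
  have hc0 : 0 < c := hc.1
  have moment {h : ℝ → ℝ} (hh : Continuous h) : ∫ F in (2 - c) / 2..1, h F * fPf c F =
      c⁻¹ * ∫ u in 0..c, h (1 - c / 2 + u ^ 2 / (2 * c)) := by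
    rw [integral_mul_fPf_eq hc0 (by linarith) hh, show c * (2 * 1 - 2 + c) = c ^ 2 by ring,
      Real.sqrt_sq hc0.le]
  have hint {p : ℝ → ℝ} (hp : Continuous p) : IntervalIntegrable p volume 0 c :=
    hp.intervalIntegrable 0 c
  have mass : ∫ F in (2 - c) / 2..1, fPf c F = 1 := by
    simpa [hc0.ne'] using moment (h := fun _ => 1) continuous_const
  have mean : ∫ F in (2 - c) / 2..1, F * fPf c F = 1 - c / 3 := by
    rw [moment (h := fun F => F) continuous_id,
      intervalIntegral.integral_add (hint (by fun_prop)) (hint (by fun_prop))]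
    simp only [intervalIntegral.integral_const, intervalIntegral.integral_div, integral_pow]
    field_simp
    ring
  have second : ∫ F in (2 - c) / 2..1, F ^ 2 * fPf c F = 1 - 2 * c / 3 + 2 * c ^ 2 / 15 := by
    rw [moment (continuous_pow 2)]
    simp only [add_sq, div_pow, ← pow_mul]
    rw [intervalIntegral.integral_add (hint (by fun_prop)) (hint (by fun_prop)),
      intervalIntegral.integral_add (hint (by fun_prop)) (hint (by fun_prop))]
    simp only [intervalIntegral.integral_const, intervalIntegral.integral_const_mul,
      intervalIntegral.integral_div, integral_pow, mul_div_assoc]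
    field_simp
    ring
  refine ⟨mass, mean, ?_⟩
  rw [second]
  ring
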